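/- arXiv:1902.05800 — 2 statements merged into one kernel-verified Lean document; each statement's English description precedes it below -/
import Mathlib

section
/- For every n ≥ 2 and every x ∈ ℝ, the B-spline satisfies B_n(x) = (1/(n-1)!) ∑_{k=0}^{n} (-1)^k C(n,k) (x - k)_+^{n-1}, where (y)_+ = max{0, y} and C(n,k) is the binomial coefficient. -/
open MeasureTheory

/-- The cardinal B-splines: `B 1` is the characteristic function of `[0,1)` and
`B n (x) = ∫_0^1 B (n-1) (x - t) dt` for `n ≥ 2`. -/
noncomputable def B : ℕ → ℝ → ℝ
  | 0, _ => 0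
  | 1, x => if 0 ≤ x ∧ x < 1 then 1 else 0
  | n + 2, x => ∫ t in (0:ℝ)..1, B (n + 1) (x - t)

/-
Integrating a truncated power `(x - k)₊ᵐ / m!` against the kernel `𝟙_[0,1]` gives the
backward difference `(x - k)₊ᵐ⁺¹ / (m+1)! - (x - k - 1)₊ᵐ⁺¹ / (m+1)!`, and Pascal's rule
turns the difference of two alternating binomial sums of order `n` into one of order `n + 1`.
So the formula propagates from `B 2`, the hat function, which is checked directly.
-/

open Finset

noncomputable def truncPow (m : ℕ) (y : ℝ) : ℝ := max 0 y ^ m / m.factorial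

@[fun_prop]
lemma continuous_truncPow (m : ℕ) : Continuous (truncPow m) := by
  unfold truncPow
  fun_prop

lemma hasDerivAt_truncPow_succ {m : ℕ} (hm : m ≠ 0) (y : ℝ) :
    HasDerivAt (truncPow (m + 1)) (truncPow m y) y := by
  refine hasDerivAt_of_hasDerivAt_of_ne' (x := 0) (fun z hz => ?_)
    (continuous_truncPow _).continuousAt (continuous_truncPow _).continuousAt y
  rcases hz.lt_or_gt with hneg | hpos
  · have hzero : truncPow (m + 1) =ᶠ[nhds z] fun _ => 0 := by
      filter_upwards [eventually_lt_nhds hneg] with w hw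
      simp [truncPow, max_eq_left hw.le]
    simpa [truncPow, max_eq_left hneg.le, hm] using
      (hasDerivAt_const z (0 : ℝ)).congr_of_eventuallyEq hzero
  · have hpow : truncPow (m + 1) =ᶠ[nhds z] fun w => w ^ (m + 1) / (m + 1).factorial := by
      filter_upwards [eventually_gt_nhds hpos] with w hw
      simp [truncPow, max_eq_right hw.le]
    convert ((hasDerivAt_pow (m + 1) z).div_const _).congr_of_eventuallyEq hpow using 1
    simp only [truncPow, max_eq_right hpos.le, Nat.factorial_succ, Nat.cast_mul]
    field_simp
    push_cast
    ring

lemma integral_truncPow {m : ℕ} (hm : m ≠ 0) (a b : ℝ) :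
    ∫ t in a..b, truncPow m t = truncPow (m + 1) b - truncPow (m + 1) a :=
  intervalIntegral.integral_eq_sub_of_hasDerivAt (fun y _ => hasDerivAt_truncPow_succ hm y)
    ((continuous_truncPow m).intervalIntegrable a b)

lemma integral_unitInterval_truncPow_sub {m : ℕ} (hm : m ≠ 0) (a : ℝ) :
    ∫ t in (0 : ℝ)..1, truncPow m (a - t) = truncPow (m + 1) a - truncPow (m + 1) (a - 1) := by
  rw [intervalIntegral.integral_comp_sub_left, sub_zero, integral_truncPow hm]

lemma sum_range_alternating_choose_succ_mul {R : Type*} [CommRing R] (n : ℕ) (g : ℕ → R) :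
    ∑ k ∈ range (n + 2), (-1) ^ k * ((n + 1).choose k : R) * g k =
      ∑ k ∈ range (n + 1), (-1) ^ k * (n.choose k : R) * (g k - g (k + 1)) := by
  have hshift : ∑ k ∈ range (n + 1), (-1) ^ k * (n.choose k : R) * g k =
      g 0 + ∑ k ∈ range (n + 1), (-1) ^ (k + 1) * (n.choose (k + 1) : R) * g (k + 1) := by
    rw [sum_range_succ' _ n, sum_range_succ _ n]
    simp only [pow_zero, Nat.choose_zero_right, Nat.cast_one, mul_one, one_mul,
      Nat.choose_succ_self, Nat.cast_zero, mul_zero, zero_mul, add_zero]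
    ring
  rw [sum_range_succ']
  simp only [Nat.choose_succ_succ', Nat.cast_add, mul_add, add_mul, sum_add_distrib, mul_sub,
    sum_sub_distrib, hshift]
  simp only [pow_succ, mul_neg, mul_one, neg_mul, sum_neg_distrib, pow_zero,
    Nat.choose_zero_right, Nat.cast_one, one_mul]
  ring

lemma B_two (x : ℝ) : B 2 x = max (min x 1 - max (x - 1) 0) 0 := by
  change ∫ t in (0 : ℝ)..1, B 1 (x - t) = _
  have hB1 (t : ℝ) : B 1 (x - t) = Set.indicator (Set.Ioc (x - 1) x) (fun _ => 1) t := by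
    simp only [B, Set.indicator_apply, Set.mem_Ioc]
    congr 1
    exact propext ⟨fun ⟨h₀, h₁⟩ => ⟨by linarith, by linarith⟩,
      fun ⟨h₀, h₁⟩ => ⟨by linarith, by linarith⟩⟩
  simp only [hB1]
  rw [intervalIntegral.integral_of_le zero_le_one, integral_indicator measurableSet_Ioc,
    setIntegral_const, measureReal_def, Measure.restrict_apply measurableSet_Ioc,
    Set.Ioc_inter_Ioc, Real.volume_Ioc, ENNReal.toReal_ofReal', smul_eq_mul, mul_one]

lemma B_eq_sum_truncPow (m : ℕ) (x : ℝ) :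
    B (m + 2) x = ∑ k ∈ range (m + 3), (-1) ^ k * ((m + 2).choose k : ℝ) *
      truncPow (m + 1) (x - k) := by
  induction m generalizing x with
  | zero =>
    simp only [zero_add, B_two, truncPow, sum_range_succ, sum_range_zero]
    norm_num [max_def, min_def]
    split_ifs <;> linarith
  | succ p ih =>
    change ∫ t in (0 : ℝ)..1, B (p + 2) (x - t) = _
    have hterm (k : ℕ) : ∫ t in (0 : ℝ)..1, truncPow (p + 1) (x - t - k) =
        truncPow (p + 2) (x - k) - truncPow (p + 2) (x - (k + 1 : ℕ)) := by
      simp_rw [sub_right_comm x _ (k : ℝ)]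
      rw [integral_unitInterval_truncPow_sub p.succ_ne_zero, Nat.cast_succ, sub_add_eq_sub_sub]
    simp_rw [ih]
    rw [intervalIntegral.integral_finsetSum fun k _ => by
      apply Continuous.intervalIntegrable; fun_prop]
    simp_rw [intervalIntegral.integral_const_mul, hterm]
    exact (sum_range_alternating_choose_succ_mul (p + 2) fun k => truncPow (p + 2) (x - k)).symm

theorem B_explicit (n : ℕ) (hn : 2 ≤ n) (x : ℝ) :
    B n x = (1 / (Nat.factorial (n - 1) : ℝ)) *
      ∑ k ∈ Finset.range (n + 1),
        (-1 : ℝ) ^ k * (n.choose k : ℝ) * (max 0 (x - (k:ℝ))) ^ (n - 1) := by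
  obtain ⟨m, rfl⟩ : ∃ m, n = m + 2 := ⟨n - 2, by omega⟩
  rw [B_eq_sum_truncPow, mul_sum]
  refine sum_congr rfl fun k _ => ?_
  rw [show m + 2 - 1 = m + 1 from rfl, truncPow]
  ring
end

section
/- Let f : [0,∞) → ℝ be continuous with f(0) = 0 and f(x) → 0 as x → ∞, and let α_1, α_2 ∈ (-1,1). Then the operator (Tg)(x) = f(x) + α_1 g(tan(πx/2)) for x ∈ [0,1) and (Tg)(x) = f(x) + α_2 g(x-1) for x ∈ [1,∞) maps C_{0,0}(ℝ⁺₀) into itself and is a contraction with Lipschitz constant max{|α_1|, |α_2|} with respect to the sup norm; hence it has a unique fixed point in C_{0,0}(ℝ⁺₀). -/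
open Real Filter Set Topology

/-- `g` belongs to `C_{0,0}(ℝ⁺₀)`: continuous on `[0,∞)`, vanishing at `0`
and at infinity. -/
def MemC00 (g : ℝ → ℝ) : Prop :=
  ContinuousOn g (Set.Ici 0) ∧ g 0 = 0 ∧ Tendsto g atTop (nhds 0)

lemma aux_tan_tendsto : Tendsto (fun x : ℝ => tan (π * x / 2)) (𝓝[<] (1:ℝ)) atTop := by
  apply Real.tendsto_tan_pi_div_two.comp
  apply tendsto_nhdsWithin_of_tendsto_nhds_of_eventually_within
  · have h : Tendsto (fun x : ℝ => π * x / 2) (𝓝 1) (𝓝 (π * 1 / 2)) :=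
      ((continuous_const.mul continuous_id).div_const 2).tendsto 1
    simpa using h.mono_left nhdsWithin_le_nhds
  · filter_upwards [self_mem_nhdsWithin] with x hx
    have h1 : x < 1 := hx
    have hp := pi_pos
    simp only [Set.mem_Iio]
    nlinarith

lemma aux_tan_contAt {x : ℝ} (h0 : 0 ≤ x) (h1 : x < 1) :
    ContinuousAt (fun x : ℝ => tan (π * x / 2)) x := by
  have hp := pi_pos
  have hc : Real.cos (π * x / 2) > 0 := by
    apply Real.cos_pos_of_mem_Ioo
    constructor
    · nlinarith
    · nlinarith
  have h2 : ContinuousAt Real.tan (π * x / 2) := Real.continuousAt_tan.2 (ne_of_gt hc)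
  exact ContinuousAt.comp (f := fun y : ℝ => π * y / 2) h2 (by fun_prop)

lemma aux_tan_nonneg {x : ℝ} (h0 : 0 ≤ x) (h1 : x < 1) :
    0 ≤ tan (π * x / 2) := by
  have hp := pi_pos
  apply Real.tan_nonneg_of_nonneg_of_le_pi_div_two <;> nlinarith

lemma formula_contOn (f g : ℝ → ℝ) (a₁ a₂ : ℝ)
    (hf : ContinuousOn f (Set.Ici 0))
    (hg : ContinuousOn g (Set.Ici 0)) (hg0 : g 0 = 0)
    (hgtop : Tendsto g atTop (nhds 0)) :
    ContinuousOn (fun x => if x < 1 then f x + a₁ * g (tan (π * x / 2))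
      else f x + a₂ * g (x - 1)) (Set.Ici 0) := by
  set F : ℝ → ℝ := fun x => if x < 1 then f x + a₁ * g (tan (π * x / 2))
      else f x + a₂ * g (x - 1) with hF
  have hF₂ : ContinuousOn (fun x => f x + a₂ * g (x - 1)) (Set.Ici 1) := by
    apply ContinuousOn.add
    · exact hf.mono (fun y hy => Set.mem_Ici.2 (le_trans zero_le_one (Set.mem_Ici.1 hy)))
    · apply ContinuousOn.mul continuousOn_const
      apply hg.comp (by fun_prop)
      intro y hy
      simp only [Set.mem_Ici] at *
      linarith
  have hF₁ : ContinuousOn (fun x => f x + a₁ * g (tan (π * x / 2)))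
      (Set.Ici 0 ∩ Set.Iio 1) := by
    apply ContinuousOn.add
    · exact hf.mono Set.inter_subset_left
    · apply ContinuousOn.mul continuousOn_const
      apply hg.comp
      · intro y hy
        exact (aux_tan_contAt hy.1 hy.2).continuousWithinAt
      · intro y hy
        exact aux_tan_nonneg hy.1 hy.2
  intro x hx
  rcases lt_trichotomy x 1 with h1 | h1 | h1
  · apply ContinuousWithinAt.mono_of_mem_nhdsWithin
    · exact ((hF₁ x ⟨hx, h1⟩).congr (fun y hy => if_pos hy.2) (if_pos h1))
    · exact Filter.inter_mem self_mem_nhdsWithin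
        (mem_nhdsWithin_of_mem_nhds (Iio_mem_nhds h1))
  · subst h1
    apply ContinuousAt.continuousWithinAt
    rw [continuousAt_iff_continuous_left'_right']
    constructor
    · -- left limit at 1
      have hfc : Tendsto f (𝓝[<] (1:ℝ)) (𝓝 (f 1)) :=
        (hf.continuousAt (Ici_mem_nhds one_pos)).tendsto.mono_left nhdsWithin_le_nhds
      have hgc : Tendsto (fun x => g (tan (π * x / 2))) (𝓝[<] (1:ℝ)) (𝓝 0) :=
        hgtop.comp aux_tan_tendsto
      have hlim : Tendsto (fun x => f x + a₁ * g (tan (π * x / 2))) (𝓝[<] (1:ℝ))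
          (𝓝 (f 1 + a₁ * 0)) := hfc.add (tendsto_const_nhds.mul hgc)
      have hEq : ∀ᶠ y in 𝓝[<] (1:ℝ), (fun x => f x + a₁ * g (tan (π * x / 2))) y = F y := by
        filter_upwards [self_mem_nhdsWithin] with y hy
        exact (if_pos hy).symm
      have : Tendsto F (𝓝[<] (1:ℝ)) (𝓝 (f 1 + a₁ * 0)) := hlim.congr' hEq
      have hF1 : F 1 = f 1 + a₁ * 0 := by
        simp [hF, hg0]
      unfold ContinuousWithinAt
      rw [hF1]
      exact this
    · -- right limit at 1
      have := (hF₂ 1 Set.self_mem_Ici).mono (Set.Ioi_subset_Ici le_rfl)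
      apply this.congr
      · intro y hy
        exact if_neg (not_lt.2 (le_of_lt hy))
      · simp [hF, hg0]
  · apply ContinuousWithinAt.mono_of_mem_nhdsWithin
    · refine ((hF₂ x (le_of_lt h1)).mono (Set.Ioi_subset_Ici le_rfl)).congr
        (fun y hy => if_neg (not_lt.2 (le_of_lt hy))) (if_neg (not_lt.2 (le_of_lt h1)))
    · exact mem_nhdsWithin_of_mem_nhds (Ioi_mem_nhds h1)

lemma bdd_of_c00 (u : ℝ → ℝ) (hu : ContinuousOn u (Set.Ici 0))
    (hut : Tendsto u atTop (nhds 0)) :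
    ∃ M : ℝ, 0 ≤ M ∧ ∀ x ∈ Set.Ici (0:ℝ), |u x| ≤ M := by
  obtain ⟨B, hB⟩ := eventually_atTop.1 ((Metric.tendsto_nhds.1 hut) 1 one_pos)
  set B' := max B 0 with hB'
  obtain ⟨C, hC⟩ := (isCompact_Icc (a := (0:ℝ)) (b := B')).exists_bound_of_continuousOn
    (hu.mono (fun y hy => hy.1))
  refine ⟨max C 1, le_trans zero_le_one (le_max_right _ _), fun x hx => ?_⟩
  rcases le_or_gt x B' with h | h
  · exact le_trans (hC x ⟨hx, h⟩) (le_max_left _ _)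
  · have := hB x (le_trans (le_max_left B 0) (le_of_lt h))
    rw [Real.dist_eq, sub_zero] at this
    exact le_trans (le_of_lt this) (le_max_right _ _)

theorem RB_contraction_C00
    (f : ℝ → ℝ) (hf : MemC00 f)
    (a₁ a₂ : ℝ) (ha₁ : |a₁| < 1) (ha₂ : |a₂| < 1)
    (T : (ℝ → ℝ) → (ℝ → ℝ))
    (hT : ∀ g : ℝ → ℝ, ∀ x : ℝ,
      T g x = if x < 1 then f x + a₁ * g (tan (π * x / 2))
              else f x + a₂ * g (x - 1)) :
    (∀ g, MemC00 g → MemC00 (T g)) ∧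
    (∀ g h, MemC00 g → MemC00 h → ∀ C : ℝ,
      (∀ x ∈ Set.Ici (0:ℝ), |g x - h x| ≤ C) →
      ∀ x ∈ Set.Ici (0:ℝ), |T g x - T h x| ≤ max |a₁| |a₂| * C) ∧
    (∃ fstar : ℝ → ℝ, (MemC00 fstar ∧ Set.EqOn (T fstar) fstar (Set.Ici 0)) ∧
      ∀ g : ℝ → ℝ, MemC00 g ∧ Set.EqOn (T g) g (Set.Ici 0) →
        Set.EqOn g fstar (Set.Ici 0)) := by
  classical
  have hk1 : max |a₁| |a₂| < 1 := max_lt ha₁ ha₂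
  have hk0 : (0:ℝ) ≤ max |a₁| |a₂| := le_trans (abs_nonneg a₁) (le_max_left _ _)
  -- Part 1
  have part1 : ∀ g, MemC00 g → MemC00 (T g) := by
    intro g hg
    have hTg : T g = fun x => if x < 1 then f x + a₁ * g (tan (π * x / 2))
        else f x + a₂ * g (x - 1) := funext (hT g)
    refine ⟨?_, ?_, ?_⟩
    · rw [hTg]
      exact formula_contOn f g a₁ a₂ hf.1 hg.1 hg.2.1 hg.2.2
    · rw [hT g 0]
      norm_num [hf.2.1, hg.2.1]
    · have hsub : Tendsto (fun x : ℝ => x - 1) atTop atTop := by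
        simpa [sub_eq_add_neg] using tendsto_atTop_add_const_right atTop (-1 : ℝ) tendsto_id
      have hlim : Tendsto (fun x => f x + a₂ * g (x - 1)) atTop (𝓝 (0 + a₂ * 0)) :=
        hf.2.2.add (tendsto_const_nhds.mul (hg.2.2.comp hsub))
      have hEq : ∀ᶠ x in atTop, (fun x => f x + a₂ * g (x - 1)) x = T g x := by
        filter_upwards [eventually_ge_atTop (1:ℝ)] with x hx
        rw [hT g x, if_neg (not_lt.2 hx)]
      simpa using hlim.congr' hEq
  -- Part 2
  have part2 : ∀ g h, MemC00 g → MemC00 h → ∀ C : ℝ,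
      (∀ x ∈ Set.Ici (0:ℝ), |g x - h x| ≤ C) →
      ∀ x ∈ Set.Ici (0:ℝ), |T g x - T h x| ≤ max |a₁| |a₂| * C := by
    intro g h _ _ C hC x hx
    have hC0 : 0 ≤ C := le_trans (abs_nonneg _) (hC 0 Set.self_mem_Ici)
    rw [hT g x, hT h x]
    by_cases h1 : x < 1
    · rw [if_pos h1, if_pos h1]
      have key : f x + a₁ * g (tan (π * x / 2)) - (f x + a₁ * h (tan (π * x / 2)))
          = a₁ * (g (tan (π * x / 2)) - h (tan (π * x / 2))) := by ring
      rw [key, abs_mul]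
      exact mul_le_mul (le_max_left _ _)
        (hC _ (aux_tan_nonneg hx h1)) (abs_nonneg _) hk0
    · rw [if_neg h1, if_neg h1]
      have key : f x + a₂ * g (x - 1) - (f x + a₂ * h (x - 1))
          = a₂ * (g (x - 1) - h (x - 1)) := by ring
      rw [key, abs_mul]
      have hx1 : (0:ℝ) ≤ x - 1 := by
        rw [not_lt] at h1; linarith
      exact mul_le_mul (le_max_right _ _) (hC _ hx1) (abs_nonneg _) hk0
  refine ⟨part1, part2, ?_⟩
  -- Part 3: existence and uniqueness of the fixed point
  set A : Set (BoundedContinuousFunction ℝ ℝ) :=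
    {g | g 0 = 0 ∧ Tendsto ⇑g atTop (𝓝 0)} with hA
  have hA1 : IsClosed {g : BoundedContinuousFunction ℝ ℝ | g 0 = 0} :=
    isClosed_eq (BoundedContinuousFunction.lipschitz_eval_const (0:ℝ)).continuous continuous_const
  have hA2 : IsClosed {g : BoundedContinuousFunction ℝ ℝ | Tendsto ⇑g atTop (𝓝 0)} := by
    apply IsSeqClosed.isClosed
    intro u g hu hug
    simp only [Set.mem_setOf_eq] at *
    rw [Metric.tendsto_nhds]
    intro ε hε
    obtain ⟨N, hN⟩ := Metric.tendsto_atTop.1 hug (ε/2) (half_pos hε)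
    have hdN : dist (u N) g < ε/2 := hN N le_rfl
    filter_upwards [Metric.tendsto_nhds.1 (hu N) (ε/2) (half_pos hε)] with x hx
    calc dist (g x) 0 ≤ dist (g x) (u N x) + dist (u N x) 0 := dist_triangle _ _ _
      _ < ε/2 + ε/2 := by
          apply add_lt_add_of_le_of_lt _ hx
          rw [dist_comm]
          exact le_trans (BoundedContinuousFunction.dist_coe_le_dist x) (le_of_lt hdN)
      _ = ε := add_halves ε
  have hAclosed : IsClosed A := hA1.inter hA2
  haveI : CompleteSpace ↥A := hAclosed.completeSpace_coe
  haveI : Nonempty ↥A := ⟨⟨0, by simp [hA], by simp only [hA, BoundedContinuousFunction.coe_zero]; exact tendsto_const_nhds⟩⟩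
  obtain ⟨Mf, hMf0, hMf⟩ := bdd_of_c00 f hf.1 hf.2.2
  -- the lifted operator
  set Φ : (ℝ → ℝ) → ℝ → ℝ := fun g x => if x < 1 then f x + a₁ * g (tan (π * x / 2))
      else f x + a₂ * g (x - 1) with hΦ
  set Ψ : (ℝ → ℝ) → ℝ → ℝ := fun g x => Φ g (max x 0) with hΨ
  have hΨcont : ∀ g : ℝ → ℝ, Continuous g → g 0 = 0 → Tendsto g atTop (𝓝 0) →
      Continuous (Ψ g) := by
    intro g hgc hg0 hgt
    have := (formula_contOn f g a₁ a₂ hf.1 hgc.continuousOn hg0 hgt).comp_continuous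
      (continuous_id.max continuous_const) (fun x => le_max_right x 0)
    exact this
  have hΨbound : ∀ g : BoundedContinuousFunction ℝ ℝ, ∀ x : ℝ,
      ‖Ψ (⇑g) x‖ ≤ Mf + (|a₁| + |a₂|) * ‖g‖ := by
    intro g x
    have hg0 : (0:ℝ) ≤ ‖g‖ := norm_nonneg g
    have hfb : |f (max x 0)| ≤ Mf := hMf _ (le_max_right x 0)
    simp only [hΨ, hΦ, Real.norm_eq_abs]
    split
    · calc |f (max x 0) + a₁ * g (tan (π * max x 0 / 2))|
          ≤ |f (max x 0)| + |a₁ * g (tan (π * max x 0 / 2))| := abs_add_le _ _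
        _ ≤ Mf + (|a₁| + |a₂|) * ‖g‖ := by
            rw [abs_mul]
            have h1 : |g (tan (π * max x 0 / 2))| ≤ ‖g‖ := g.norm_coe_le_norm _
            have h2 : |a₁| * |g (tan (π * max x 0 / 2))| ≤ |a₁| * ‖g‖ :=
              mul_le_mul_of_nonneg_left h1 (abs_nonneg _)
            nlinarith [abs_nonneg a₂]
    · calc |f (max x 0) + a₂ * g (max x 0 - 1)|
          ≤ |f (max x 0)| + |a₂ * g (max x 0 - 1)| := abs_add_le _ _
        _ ≤ Mf + (|a₁| + |a₂|) * ‖g‖ := by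
            rw [abs_mul]
            have h1 : |g (max x 0 - 1)| ≤ ‖g‖ := g.norm_coe_le_norm _
            have h2 : |a₂| * |g (max x 0 - 1)| ≤ |a₂| * ‖g‖ :=
              mul_le_mul_of_nonneg_left h1 (abs_nonneg _)
            nlinarith [abs_nonneg a₁]
  have hΨmem : ∀ g : ↥A, Ψ (⇑(g:BoundedContinuousFunction ℝ ℝ)) 0 = 0 ∧
      Tendsto (Ψ (⇑(g:BoundedContinuousFunction ℝ ℝ))) atTop (𝓝 0) := by
    intro g
    obtain ⟨hg0, hgt⟩ := g.2
    constructor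
    · simp only [hΨ, hΦ]
      norm_num [hf.2.1, hg0]
    · have hsub : Tendsto (fun x : ℝ => x - 1) atTop atTop := by
        simpa [sub_eq_add_neg] using tendsto_atTop_add_const_right atTop (-1 : ℝ) tendsto_id
      have hlim : Tendsto (fun x => f x + a₂ * (g:BoundedContinuousFunction ℝ ℝ) (x - 1))
          atTop (𝓝 (0 + a₂ * 0)) := hf.2.2.add (tendsto_const_nhds.mul (hgt.comp hsub))
      have hEq : ∀ᶠ x in atTop,
          (fun x => f x + a₂ * (g:BoundedContinuousFunction ℝ ℝ) (x - 1)) x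
          = Ψ (⇑(g:BoundedContinuousFunction ℝ ℝ)) x := by
        filter_upwards [eventually_ge_atTop (1:ℝ)] with x hx
        have hmax : max x 0 = x := max_eq_left (le_trans zero_le_one hx)
        simp only [hΨ, hΦ, hmax, if_neg (not_lt.2 hx)]
      simpa using hlim.congr' hEq
  set S : ↥A → ↥A := fun g =>
    ⟨BoundedContinuousFunction.ofNormedAddCommGroup (Ψ (⇑(g:BoundedContinuousFunction ℝ ℝ)))
      (hΨcont _ (g:BoundedContinuousFunction ℝ ℝ).continuous g.2.1 g.2.2)
      (Mf + (|a₁| + |a₂|) * ‖(g:BoundedContinuousFunction ℝ ℝ)‖)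
      (hΨbound (g:BoundedContinuousFunction ℝ ℝ)),
      (hΨmem g).1, (hΨmem g).2⟩ with hS
  have hScoe : ∀ g : ↥A, ∀ x : ℝ, ((S g : BoundedContinuousFunction ℝ ℝ)) x
      = Ψ (⇑(g:BoundedContinuousFunction ℝ ℝ)) x := fun g x => rfl
  -- contraction
  set K : NNReal := ⟨max |a₁| |a₂|, hk0⟩ with hK
  have hcontr : ContractingWith K S := by
    constructor
    · exact_mod_cast hk1
    · apply LipschitzWith.of_dist_le_mul
      intro g h
      rw [Subtype.dist_eq, BoundedContinuousFunction.dist_le]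
      · intro x
        rw [hScoe g x, hScoe h x]
        have hd : ∀ t : ℝ, dist ((g:BoundedContinuousFunction ℝ ℝ) t)
            ((h:BoundedContinuousFunction ℝ ℝ) t)
            ≤ dist (g:BoundedContinuousFunction ℝ ℝ) (h:BoundedContinuousFunction ℝ ℝ) :=
          fun t => BoundedContinuousFunction.dist_coe_le_dist t
        have hdist : dist g h = dist (g:BoundedContinuousFunction ℝ ℝ)
            (h:BoundedContinuousFunction ℝ ℝ) := Subtype.dist_eq g h
        simp only [hΨ, hΦ, Real.dist_eq]
        split
        · have key : f (max x 0) + a₁ * (g:BoundedContinuousFunction ℝ ℝ) (tan (π * max x 0 / 2))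
              - (f (max x 0) + a₁ * (h:BoundedContinuousFunction ℝ ℝ) (tan (π * max x 0 / 2)))
              = a₁ * ((g:BoundedContinuousFunction ℝ ℝ) (tan (π * max x 0 / 2))
                - (h:BoundedContinuousFunction ℝ ℝ) (tan (π * max x 0 / 2))) := by ring
          rw [key, abs_mul, hdist]
          have := hd (tan (π * max x 0 / 2))
          rw [Real.dist_eq] at this
          refine mul_le_mul (le_max_left _ _) this (abs_nonneg _) ?_
          exact hk0
        · have key : f (max x 0) + a₂ * (g:BoundedContinuousFunction ℝ ℝ) (max x 0 - 1)
              - (f (max x 0) + a₂ * (h:BoundedContinuousFunction ℝ ℝ) (max x 0 - 1))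
              = a₂ * ((g:BoundedContinuousFunction ℝ ℝ) (max x 0 - 1)
                - (h:BoundedContinuousFunction ℝ ℝ) (max x 0 - 1)) := by ring
          rw [key, abs_mul, hdist]
          have := hd (max x 0 - 1)
          rw [Real.dist_eq] at this
          exact mul_le_mul (le_max_right _ _) this (abs_nonneg _) hk0
      · exact mul_nonneg hk0 dist_nonneg
  -- the fixed point
  set gs : ↥A := ContractingWith.fixedPoint S hcontr with hgs
  have hfp : S gs = gs := hcontr.fixedPoint_isFixedPt
  set fstar : ℝ → ℝ := ⇑((gs : ↥A) : BoundedContinuousFunction ℝ ℝ) with hfstar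
  have hfixval : ∀ x : ℝ, Ψ fstar x = fstar x := by
    intro x
    have h1 := congrArg (fun u : ↥A => (u : BoundedContinuousFunction ℝ ℝ) x) hfp
    have h2 : Ψ fstar x = ((S gs : ↥A) : BoundedContinuousFunction ℝ ℝ) x :=
      (hScoe gs x).symm
    rw [h2]
    exact h1
  have hfstarmem : MemC00 fstar :=
    ⟨((gs : ↥A) : BoundedContinuousFunction ℝ ℝ).continuous.continuousOn, gs.2.1, gs.2.2⟩
  have hfstareq : Set.EqOn (T fstar) fstar (Set.Ici 0) := by
    intro x hx
    have hmax : max x 0 = x := max_eq_left hx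
    have := hfixval x
    simp only [hΨ, hmax] at this
    rw [hT fstar x]
    exact this
  refine ⟨fstar, ⟨hfstarmem, hfstareq⟩, ?_⟩
  -- uniqueness
  intro g ⟨hg, hgfix⟩
  obtain ⟨M1, hM10, hM1⟩ := bdd_of_c00 g hg.1 hg.2.2
  obtain ⟨M2, hM20, hM2⟩ := bdd_of_c00 fstar hfstarmem.1 hfstarmem.2.2
  set D : Set ℝ := (fun x => |g x - fstar x|) '' Set.Ici 0 with hD
  have hne : D.Nonempty := ⟨_, ⟨0, Set.self_mem_Ici, rfl⟩⟩
  have hbdd : BddAbove D := by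
    refine ⟨M1 + M2, ?_⟩
    rintro y ⟨x, hx, rfl⟩
    calc |g x - fstar x| ≤ |g x| + |fstar x| := abs_sub _ _
      _ ≤ M1 + M2 := add_le_add (hM1 x hx) (hM2 x hx)
  set C : ℝ := sSup D with hC
  have hCub : ∀ x ∈ Set.Ici (0:ℝ), |g x - fstar x| ≤ C :=
    fun x hx => le_csSup hbdd ⟨x, hx, rfl⟩
  have hstep : ∀ x ∈ Set.Ici (0:ℝ), |g x - fstar x| ≤ max |a₁| |a₂| * C := by
    intro x hx
    have := part2 g fstar hg hfstarmem C hCub x hx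
    rwa [hgfix hx, hfstareq hx] at this
  have hCle : C ≤ max |a₁| |a₂| * C := by
    apply csSup_le hne
    rintro y ⟨x, hx, rfl⟩
    exact hstep x hx
  have hC0 : 0 ≤ C := le_trans (abs_nonneg _) (hCub 0 Set.self_mem_Ici)
  have hCzero : C ≤ 0 := by nlinarith
  intro x hx
  have : |g x - fstar x| ≤ 0 := le_trans (hCub x hx) hCzero
  rwa [abs_nonpos_iff, sub_eq_zero] at this
end
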